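/- The weak-$L^1$ space $L_{1,\infty}(0,1)$ does not have type $1$: for every constant $K > 0$ there exist finitely many functions $g_1, \dots, g_n \in L_{1,\infty}(0,1)$ such that $\int_0^1 \|\sum_{k=1}^n r_k(t) g_k\|_{1,\infty} dt > K \sum_{k=1}^n \|g_k\|_{1,\infty}$. -/

import Mathlib

open MeasureTheory Set

/-- The distribution function of `f` viewed as a function on `(0,1)`. -/
noncomputable def distrib (f : ℝ → ℝ) (s : ℝ) : ENNReal :=
  volume {x ∈ Set.Ioo (0 : ℝ) 1 | s < |f x|}

/-- The decreasing rearrangement `f*` of a function on `(0,1)`. -/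
noncomputable def rearr (f : ℝ → ℝ) (t : ℝ) : ℝ :=
  sInf {s : ℝ | 0 < s ∧ distrib f s ≤ ENNReal.ofReal t}

/-- The weak-`L¹` quasi-norm `‖f‖_{1,∞} = sup_{t ∈ (0,1)} t f*(t)`. -/
noncomputable def wnorm (f : ℝ → ℝ) : ENNReal :=
  ⨆ t ∈ Set.Ioo (0 : ℝ) 1, ENNReal.ofReal (t * rearr f t)

open Real in
/-- The Rademacher functions `r_k(t) = sign (sin (2^k π t))`. -/
noncomputable def rademacher (k : ℕ) (t : ℝ) : ℝ :=
  Real.sign (Real.sin (2 ^ k * π * t))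

/-!
Fix `m`. Each of the `2 ^ m` sign patterns `p` gets a region at its own geometric scale `h`, and on
that region the `i`-th function is `(-1) ^ (p i)` times the truncated hyperbola `(x - a_i)⁻¹`, the
poles `a_i` being spaced by `h`. Since the scales are geometrically separated, each function has
weak norm at most `2`. For almost every `t`, on the region of the sign pattern of
`(r_1(t), …, r_m(t))` all `m` hyperbolas add up with the same sign; their sum exceeds
`(log m - 2) / h` on a set of measure `m h / 2`, so the Rademacher sum has weak norm at least
`m (log m - 2) / 4`, while the norms of the functions add up to at most `2 m`.
-/

open Real

section WeakNorm

variable {f : ℝ → ℝ} {s t : ℝ}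

lemma rearr_le (hs : 0 < s) (h : distrib f s ≤ ENNReal.ofReal t) : rearr f t ≤ s :=
  csInf_le ⟨0, fun _ h => h.1.le⟩ ⟨hs, h⟩

lemma wnorm_le_of_distrib_le {C : ℝ} (hC : 0 < C)
    (h : ∀ s, 0 < s → distrib f s ≤ ENNReal.ofReal (C / s)) : wnorm f ≤ ENNReal.ofReal C := by
  refine iSup₂_le fun t ht => ENNReal.ofReal_le_ofReal ?_
  have hrearr : rearr f t ≤ C / t :=
    rearr_le (div_pos hC ht.1) (by simpa [div_div_cancel₀ hC.ne'] using h (C / t) (div_pos hC ht.1))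
  calc t * rearr f t ≤ t * (C / t) := mul_le_mul_of_nonneg_left hrearr ht.1.le
    _ = C := mul_div_cancel₀ C ht.1.ne'

lemma distrib_eq_zero {M : ℝ} (hM : ∀ x, |f x| ≤ M) (hs : M ≤ s) : distrib f s = 0 :=
  measure_mono_null (fun x hx => (hM x).not_gt (hs.trans_lt hx.2)) measure_empty

lemma le_rearr {A : Set ℝ} {B : ℝ} (hbdd : ∃ M, ∀ x, |f x| ≤ M) (hA : A ⊆ Ioo 0 1)
    (hvol : ENNReal.ofReal t < volume A) (hB : ∀ x ∈ A, B ≤ |f x|) : B ≤ rearr f t := by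
  obtain ⟨M, hM⟩ := hbdd
  refine le_csInf
    ⟨max M 1, by positivity, (distrib_eq_zero hM (le_max_left _ _)).trans_le bot_le⟩ ?_
  rintro s ⟨-, hst⟩
  by_contra! hsB
  have hAs : volume A ≤ distrib f s := measure_mono fun x hx => ⟨hA hx, hsB.trans_le (hB x hx)⟩
  exact (hst.trans_lt hvol).not_ge hAs

lemma ofReal_mul_le_wnorm {A : Set ℝ} {B : ℝ} (ht : t ∈ Ioo 0 1) (hbdd : ∃ M, ∀ x, |f x| ≤ M)
    (hA : A ⊆ Ioo 0 1) (hvol : ENNReal.ofReal t < volume A) (hB : ∀ x ∈ A, B ≤ |f x|) :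
    ENNReal.ofReal (t * B) ≤ wnorm f :=
  (ENNReal.ofReal_le_ofReal (mul_le_mul_of_nonneg_left (le_rearr hbdd hA hvol hB) ht.1.le)).trans
    (le_iSup₂ (f := fun t _ => ENNReal.ofReal (t * rearr f t)) t ht)

end WeakNorm

lemma exists_forall_abs_sum_le {ι : Type*} (s : Finset ι) {f : ι → ℝ → ℝ}
    (hf : ∀ i, ∃ C, ∀ x, |f i x| ≤ C) : ∃ C, ∀ x, |∑ i ∈ s, f i x| ≤ C := by
  choose C hC using hf
  exact ⟨∑ i ∈ s, C i, fun x => (Finset.abs_sum_le_sum_abs _ _).trans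
    (Finset.sum_le_sum fun i _ => hC i x)⟩

lemma log_add_one_sub_one_le_sum_inv {ν : ℝ} (hν : 0 ≤ ν) :
    log (ν + 1) - 1 ≤ ∑ i ∈ Finset.range ⌊ν⌋₊, (ν - i)⁻¹ := by
  set k := ⌊ν⌋₊
  have hk : (k : ℝ) ≤ ν := Nat.floor_le hν
  have hk' : ν < k + 1 := Nat.lt_floor_add_one ν
  have harmonic_bound : log (k + 2) - 1 ≤ ∑ i ∈ Finset.range k, ((i : ℝ) + 2)⁻¹ := by
    have h := log_add_one_le_harmonic (k + 1)
    rw [harmonic, Finset.sum_range_succ'] at h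
    push_cast at h
    simp only [add_assoc, one_add_one_eq_two] at h
    linarith
  calc log (ν + 1) - 1 ≤ log (k + 2) - 1 := by
        gcongr ?_ - 1; exact log_le_log (by linarith) (by linarith)
    _ ≤ ∑ i ∈ Finset.range k, ((i : ℝ) + 2)⁻¹ := harmonic_bound
    _ = ∑ i ∈ Finset.range k, (((k - 1 - i : ℕ) : ℝ) + 2)⁻¹ :=
        (Finset.sum_range_reflect (fun i => ((i : ℝ) + 2)⁻¹) k).symm
    _ ≤ ∑ i ∈ Finset.range k, (ν - i)⁻¹ := by
        refine Finset.sum_le_sum fun i hi => ?_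
        have hik : i < k := Finset.mem_range.1 hi
        have hcast : ((k - 1 - i : ℕ) : ℝ) = k - 1 - i := by
          rw [Nat.cast_sub (by omega), Nat.cast_sub (by omega)]; simp
        have hi' : (i : ℝ) + 1 ≤ k := by exact_mod_cast hik
        rw [hcast]
        exact inv_anti₀ (by linarith) (by linarith)

section TruncHyperbola

noncomputable def truncHyperbola (a δ r x : ℝ) : ℝ :=
  if x - a ∈ Ico δ r then (x - a)⁻¹ else 0

variable {a δ r x : ℝ}

lemma truncHyperbola_of_mem (h : x - a ∈ Ico δ r) : truncHyperbola a δ r x = (x - a)⁻¹ :=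
  if_pos h

lemma truncHyperbola_nonneg (hδ : 0 ≤ δ) : 0 ≤ truncHyperbola a δ r x := by
  unfold truncHyperbola
  split_ifs with h
  · exact inv_nonneg.2 (hδ.trans h.1)
  · rfl

lemma truncHyperbola_le (hδ : 0 < δ) : truncHyperbola a δ r x ≤ δ⁻¹ := by
  unfold truncHyperbola
  split_ifs with h
  · exact inv_anti₀ hδ h.1
  · positivity

lemma mem_Ico_of_truncHyperbola_ne_zero (h : truncHyperbola a δ r x ≠ 0) : x - a ∈ Ico δ r := by
  by_contra h'
  exact h (if_neg h')

lemma setOf_lt_truncHyperbola_subset {s : ℝ} (hs : 0 < s) :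
    {x | s < truncHyperbola a δ r x} ⊆ Ioo a (a + s⁻¹) := by
  intro x hx
  have hx : s < truncHyperbola a δ r x := hx
  have hx' : s < (x - a)⁻¹ := by
    rwa [truncHyperbola_of_mem
      (mem_Ico_of_truncHyperbola_ne_zero (hs.trans hx).ne')] at hx
  have hxa : 0 < x - a := inv_pos.1 (hs.trans hx')
  exact ⟨by linarith, by linarith [(lt_inv_comm₀ hs hxa).1 hx']⟩

lemma measurable_truncHyperbola : Measurable (truncHyperbola a δ r) :=
  Measurable.ite (measurableSet_Ico.preimage (measurable_id.sub_const a))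
    (measurable_id.sub_const a).inv measurable_const

lemma log_sub_two_div_le_sum_truncHyperbola {m : ℕ} {b h : ℝ} (hh : 0 < h)
    (hx : x - b ∈ Ico (m * h / 2) (m * h)) :
    (log m - 2) / h ≤ ∑ i ∈ Finset.range m, truncHyperbola (b + i * h) h (m * h) x := by
  set ν := (x - b) / h
  have hxb : x - b = h * ν := (mul_div_cancel₀ _ hh.ne').symm
  have hν : m / 2 ≤ ν ∧ ν < m := by
    rw [hxb] at hx
    constructor <;> nlinarith [hx.1, hx.2]
  have hm : (0 : ℝ) < m := by linarith
  have hk : ⌊ν⌋₊ ≤ m := (Nat.floor_lt (by linarith)).2 hν.2 |>.le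
  have hterm : ∀ i ∈ Finset.range ⌊ν⌋₊,
      truncHyperbola (b + i * h) h (m * h) x = h⁻¹ * (ν - i)⁻¹ := by
    intro i hi
    have hi' : ((i + 1 : ℕ) : ℝ) ≤ ν := (Nat.le_floor_iff (by linarith)).1 (Finset.mem_range.1 hi)
    push_cast at hi'
    have hxi : x - (b + i * h) = h * (ν - i) := by linear_combination hxb
    have hmem : x - (b + i * h) ∈ Ico h (m * h) := by
      rw [hxi]; constructor <;> nlinarith [(Nat.cast_nonneg i : (0 : ℝ) ≤ i)]
    rw [truncHyperbola_of_mem hmem, hxi, mul_inv]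
  have hlog : log m - 2 ≤ log (ν + 1) - 1 := by
    have : log m ≤ log 2 + log (ν + 1) := by
      rw [← log_mul two_ne_zero (by linarith)]
      exact log_le_log hm (by linarith)
    linarith [log_two_lt_d9]
  calc (log m - 2) / h ≤ h⁻¹ * (log (ν + 1) - 1) := by
        rw [div_eq_inv_mul]; exact mul_le_mul_of_nonneg_left hlog (by positivity)
    _ ≤ h⁻¹ * ∑ i ∈ Finset.range ⌊ν⌋₊, (ν - i)⁻¹ :=
        mul_le_mul_of_nonneg_left (log_add_one_sub_one_le_sum_inv (by linarith)) (by positivity)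
    _ = ∑ i ∈ Finset.range ⌊ν⌋₊, truncHyperbola (b + i * h) h (m * h) x := by
        rw [Finset.mul_sum]; exact (Finset.sum_congr rfl hterm).symm
    _ ≤ ∑ i ∈ Finset.range m, truncHyperbola (b + i * h) h (m * h) x :=
        Finset.sum_le_sum_of_subset_of_nonneg (Finset.range_subset_range.2 hk)
          fun _ _ _ => truncHyperbola_nonneg hh.le

end TruncHyperbola

section Spikes

variable {m : ℕ}

noncomputable def step (m j : ℕ) : ℝ := (4 * m : ℝ)⁻¹ ^ (j + 1)

def region (m j : ℕ) : Set ℝ := Ioo (2 * m * step m j) (4 * m * step m j)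

noncomputable def spike (m j i : ℕ) : ℝ → ℝ :=
  truncHyperbola (2 * m * step m j + i * step m j) (step m j) (m * step m j)

lemma step_pos (hm : 0 < m) (j : ℕ) : 0 < step m j := by
  unfold step; positivity

lemma four_mul_step_le (hm : 0 < m) {j j' : ℕ} (h : j < j') :
    4 * m * step m j' ≤ step m j := by
  have hm' : (1 : ℝ) ≤ m := by exact_mod_cast hm
  have hβ : (4 * m : ℝ)⁻¹ ≤ 1 := inv_le_one_of_one_le₀ (by linarith)
  calc 4 * m * step m j' ≤ 4 * m * step m (j + 1) :=
        mul_le_mul_of_nonneg_left (pow_le_pow_of_le_one (by positivity) hβ (by omega))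
          (by positivity)
    _ = step m j := by
        rw [step, step, pow_succ', ← mul_assoc, mul_inv_cancel₀ (by positivity), one_mul]

lemma four_mul_step_le_one (hm : 0 < m) (j : ℕ) : 4 * m * step m j ≤ 1 := by
  have hm' : (1 : ℝ) ≤ m := by exact_mod_cast hm
  calc 4 * m * step m j ≤ 4 * m * (4 * m : ℝ)⁻¹ :=
        mul_le_mul_of_nonneg_left (pow_le_of_le_one (by positivity)
          (inv_le_one_of_one_le₀ (by linarith)) (Nat.succ_ne_zero j)) (by positivity)
    _ = 1 := mul_inv_cancel₀ (by positivity)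

lemma region_subset_Ioo (hm : 0 < m) (j : ℕ) : region m j ⊆ Ioo 0 1 := by
  have hpos : 0 < 2 * m * step m j := by have := step_pos hm j; positivity
  exact fun x hx => ⟨hpos.trans hx.1, hx.2.trans_le (four_mul_step_le_one hm j)⟩

lemma eq_of_mem_region (hm : 0 < m) {j j' : ℕ} {x : ℝ} (hx : x ∈ region m j)
    (hx' : x ∈ region m j') : j = j' := by
  have hm' : (1 : ℝ) ≤ m := by exact_mod_cast hm
  have below : ∀ {k k' : ℕ}, k < k' → x ∈ region m k → x ∉ region m k' := fun {k _} h hk hk' => by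
    have := four_mul_step_le hm h
    have := step_pos hm k
    nlinarith [hk.1, hk'.2]
  rcases lt_trichotomy j j' with h | h | h
  · exact absurd hx' (below h hx)
  · exact h
  · exact absurd hx (below h hx')

lemma spike_nonneg (hm : 0 < m) (j i : ℕ) (x : ℝ) : 0 ≤ spike m j i x :=
  truncHyperbola_nonneg (step_pos hm j).le

lemma spike_le (hm : 0 < m) (j i : ℕ) (x : ℝ) : spike m j i x ≤ (step m j)⁻¹ :=
  truncHyperbola_le (step_pos hm j)

lemma mem_region_of_spike_ne_zero {j i : ℕ} (hi : i < m) {x : ℝ} (h : spike m j i x ≠ 0) :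
    x ∈ region m j := by
  have hx := mem_Ico_of_truncHyperbola_ne_zero h
  have hh := step_pos (i.zero_le.trans_lt hi) j
  have hi' : (i : ℝ) + 1 ≤ m := by exact_mod_cast hi
  constructor <;> nlinarith [hx.1, hx.2, (Nat.cast_nonneg i : (0 : ℝ) ≤ i)]

lemma measurable_spike (m j i : ℕ) : Measurable (spike m j i) := measurable_truncHyperbola

end Spikes

section SignedSpikes

variable {m : ℕ}

noncomputable def signedSpikes (m : ℕ) (i : Fin m) (x : ℝ) : ℝ :=
  ∑ p : Fin m → Fin 2, (-1) ^ (p i : ℕ) * spike m (finFunctionFinEquiv p) i x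

lemma signedSpikes_eq_of_mem_region (i : Fin m) (p : Fin m → Fin 2) {x : ℝ}
    (hx : x ∈ region m (finFunctionFinEquiv p)) :
    signedSpikes m i x = (-1) ^ (p i : ℕ) * spike m (finFunctionFinEquiv p) i x := by
  refine Finset.sum_eq_single p (fun q _ hqp => ?_) (by simp)
  by_contra hq
  have hxq := mem_region_of_spike_ne_zero i.2 (right_ne_zero_of_mul hq)
  exact hqp (finFunctionFinEquiv.injective (Fin.ext (eq_of_mem_region i.pos hxq hx)))

lemma exists_lt_spike_of_lt_abs (i : Fin m) {s x : ℝ} (hs : 0 < s)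
    (h : s < |signedSpikes m i x|) : ∃ j, s < spike m j i x := by
  obtain ⟨p, -, hp⟩ := Finset.exists_ne_zero_of_sum_ne_zero
    (abs_pos.1 (hs.trans h) : signedSpikes m i x ≠ 0)
  refine ⟨finFunctionFinEquiv p, ?_⟩
  have hx := mem_region_of_spike_ne_zero i.2 (right_ne_zero_of_mul hp)
  rwa [signedSpikes_eq_of_mem_region i p hx, abs_mul, abs_neg_one_pow, one_mul,
    abs_of_nonneg (spike_nonneg i.pos _ _ _)] at h

lemma distrib_signedSpikes_le (i : Fin m) {s : ℝ} (hs : 0 < s) :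
    distrib (signedSpikes m i) s ≤ ENNReal.ofReal (2 / s) := by
  have hm := i.pos
  have hex : ∃ j, step m j < s⁻¹ := by
    obtain ⟨n, hn⟩ := exists_pow_lt_of_lt_one (inv_pos.2 hs)
      (inv_lt_one_of_one_lt₀ (by norm_cast; omega) : (4 * m : ℝ)⁻¹ < 1)
    exact ⟨n, (pow_le_pow_of_le_one (by positivity)
      (inv_le_one_of_one_le₀ (by norm_cast; omega)) n.le_succ).trans_lt hn⟩
  -- Only the coarsest scale `j₀` reached by the level `s` contributes a spike above `s`, of
  -- measure at most `s⁻¹`; as consecutive scales have ratio `(4 m)⁻¹`, all finer regions lie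
  -- in `(0, s⁻¹)`.
  set j₀ := Nat.find hex
  have hsub : {x ∈ Ioo (0 : ℝ) 1 | s < |signedSpikes m i x|} ⊆
      {x | s < spike m j₀ i x} ∪ Ioo 0 s⁻¹ := by
    rintro x ⟨hx01, hx⟩
    obtain ⟨j, hj⟩ := exists_lt_spike_of_lt_abs i hs hx
    have hjs : step m j < s⁻¹ :=
      (lt_inv_comm₀ hs (step_pos hm j)).1 (hj.trans_le (spike_le hm j i x))
    rcases (Nat.find_min' hex hjs).eq_or_lt with rfl | hlt
    · exact Or.inl hj
    · have hxj := mem_region_of_spike_ne_zero i.2 (hs.trans hj).ne'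
      exact Or.inr ⟨hx01.1, hxj.2.trans_le ((four_mul_step_le hm hlt).trans (Nat.find_spec hex).le)⟩
  calc distrib (signedSpikes m i) s
      ≤ volume {x | s < spike m j₀ i x} + volume (Ioo 0 s⁻¹) :=
        (measure_mono hsub).trans (measure_union_le _ _)
    _ ≤ ENNReal.ofReal s⁻¹ + ENNReal.ofReal s⁻¹ := by
        gcongr
        · exact (measure_mono (setOf_lt_truncHyperbola_subset hs)).trans_eq
            (by rw [Real.volume_Ioo, add_sub_cancel_left])
        · rw [Real.volume_Ioo, sub_zero]
    _ = ENNReal.ofReal (2 / s) := by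
        rw [← ENNReal.ofReal_add (by positivity) (by positivity)]; ring_nf

lemma wnorm_signedSpikes_le (i : Fin m) : wnorm (signedSpikes m i) ≤ ENNReal.ofReal 2 :=
  wnorm_le_of_distrib_le two_pos fun _ hs => distrib_signedSpikes_le i hs

lemma measurable_signedSpikes (i : Fin m) : Measurable (signedSpikes m i) :=
  Finset.measurable_sum _ fun _ _ => (measurable_spike _ _ _).const_mul _

lemma exists_forall_abs_signedSpikes_le (i : Fin m) : ∃ C, ∀ x, |signedSpikes m i x| ≤ C :=
  exists_forall_abs_sum_le _ fun p => ⟨_, fun x => by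
    rw [abs_mul, abs_neg_one_pow, one_mul, abs_of_nonneg (spike_nonneg i.pos _ _ _)]
    exact spike_le i.pos _ _ x⟩

end SignedSpikes

section Rademacher

lemma ae_rademacher_ne_zero (k : ℕ) : ∀ᵐ t, rademacher k t ≠ 0 := by
  refine measure_mono_null (fun t ht => ?_)
    ((countable_range fun n : ℤ => (n : ℝ) / 2 ^ k).measure_zero volume)
  obtain ⟨n, hn⟩ := Real.sin_eq_zero_iff.1 (Real.sign_eq_zero_iff.1 (not_not.1 ht))
  have hnt : (n : ℝ) = 2 ^ k * t := mul_right_cancel₀ pi_ne_zero (by rw [hn]; ring)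
  exact ⟨n, by simp only [hnt]; field_simp⟩

noncomputable def signPattern (m : ℕ) (t : ℝ) : Fin m → Fin 2 :=
  fun i => if 0 < rademacher (i + 1) t then 0 else 1

lemma rademacher_mul_neg_one_pow_signPattern {m : ℕ} {t : ℝ} (i : Fin m)
    (ht : rademacher (i + 1) t ≠ 0) :
    rademacher (i + 1) t * (-1) ^ (signPattern m t i : ℕ) = 1 := by
  unfold signPattern
  rcases Real.sign_apply_eq (Real.sin (2 ^ ((i : ℕ) + 1) * π * t)) with h | h | h
  · norm_num [rademacher, h]
  · exact absurd h ht
  · norm_num [rademacher, h]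

variable {m : ℕ} {t : ℝ}

lemma rademacher_sum_eq_sum_spike (ht : ∀ i : Fin m, rademacher (i + 1) t ≠ 0) {x : ℝ}
    (hx : x ∈ region m (finFunctionFinEquiv (signPattern m t))) :
    ∑ i : Fin m, rademacher (i + 1) t * signedSpikes m i x =
      ∑ i ∈ Finset.range m, spike m (finFunctionFinEquiv (signPattern m t)) i x := by
  rw [← Fin.sum_univ_eq_sum_range]
  refine Finset.sum_congr rfl fun i _ => ?_
  rw [signedSpikes_eq_of_mem_region i _ hx, ← mul_assoc,
    rademacher_mul_neg_one_pow_signPattern i (ht i), one_mul]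

lemma ofReal_le_wnorm_rademacher_sum (hm : 0 < m) (ht : ∀ i : Fin m, rademacher (i + 1) t ≠ 0) :
    ENNReal.ofReal (m * (log m - 2) / 4) ≤
      wnorm (fun x => ∑ i : Fin m, rademacher (i + 1) t * signedSpikes m i x) := by
  set j := (finFunctionFinEquiv (signPattern m t) : ℕ)
  set h := step m j
  have hh : 0 < h := step_pos hm j
  have hm' : (1 : ℝ) ≤ m := by exact_mod_cast hm
  have hcore : Ico (2 * m * h + m * h / 2) (3 * m * h) ⊆ region m j := fun x hx =>
    ⟨by nlinarith [hx.1], by nlinarith [hx.2]⟩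
  have hbdd : ∃ C, ∀ x, |∑ i : Fin m, rademacher (i + 1) t * signedSpikes m i x| ≤ C :=
    exists_forall_abs_sum_le _ fun i => by
      obtain ⟨C, hC⟩ := exists_forall_abs_signedSpikes_le i
      exact ⟨|rademacher (i + 1) t| * C, fun x => by
        rw [abs_mul]; exact mul_le_mul_of_nonneg_left (hC x) (abs_nonneg _)⟩
  have hval : m * h / 4 * ((log m - 2) / h) = m * (log m - 2) / 4 := by field_simp
  rw [← hval]
  refine ofReal_mul_le_wnorm ?_ hbdd (hcore.trans (region_subset_Ioo hm j)) ?_ fun x hx => ?_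
  · have h4 : 4 * m * h ≤ 1 := four_mul_step_le_one hm j
    constructor <;> nlinarith
  · rw [Real.volume_Ico, ENNReal.ofReal_lt_ofReal_iff (by nlinarith)]
    nlinarith
  · rw [rademacher_sum_eq_sum_spike ht (hcore hx)]
    refine (log_sub_two_div_le_sum_truncHyperbola hh ⟨?_, ?_⟩).trans (le_abs_self _)
    · linarith [hx.1]
    · linarith [hx.2]

end Rademacher

/-- Weak-`L¹(0,1)` does not have type 1: for every `K > 0` there are finitely many
functions in the space whose Rademacher average of the quasi-norm exceeds
`K` times the sum of the quasi-norms. -/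
theorem stmt9 : ∀ K > (0 : ℝ), ∃ (n : ℕ) (g : Fin n → ℝ → ℝ),
    (∀ k, Measurable (g k)) ∧ (∀ k, wnorm (g k) < ⊤) ∧
    ENNReal.ofReal K * ∑ k, wnorm (g k) <
      ∫⁻ t in Set.Ioo (0 : ℝ) 1,
        wnorm (fun x => ∑ k : Fin n, rademacher ((k : ℕ) + 1) t * g k x) := by
  intro K hK
  obtain ⟨m, hm⟩ := exists_nat_gt (exp (8 * K + 2))
  have hm0 : 0 < m := by exact_mod_cast (exp_pos _).trans hm
  have hmR : (0 : ℝ) < m := by exact_mod_cast hm0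
  have hlog : 8 * K + 2 < log m := (lt_log_iff_exp_lt (by positivity)).2 hm
  refine ⟨m, signedSpikes m, measurable_signedSpikes,
    fun i => (wnorm_signedSpikes_le i).trans_lt ENNReal.ofReal_lt_top, ?_⟩
  have hsum : ∑ i, wnorm (signedSpikes m i) ≤ ENNReal.ofReal (2 * m) := by
    refine (Finset.sum_le_sum fun i _ => wnorm_signedSpikes_le i).trans_eq ?_
    rw [Finset.sum_const, Finset.card_univ, Fintype.card_fin, nsmul_eq_mul,
      ← ENNReal.ofReal_natCast, ← ENNReal.ofReal_mul (by positivity), mul_comm]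
  have hae : ∀ᵐ t ∂volume.restrict (Ioo (0 : ℝ) 1), ENNReal.ofReal (m * (log m - 2) / 4) ≤
      wnorm (fun x => ∑ i : Fin m, rademacher (i + 1) t * signedSpikes m i x) :=
    ae_restrict_of_ae ((ae_all_iff.2 fun i => ae_rademacher_ne_zero _).mono
      fun t ht => ofReal_le_wnorm_rademacher_sum hm0 ht)
  calc ENNReal.ofReal K * ∑ i, wnorm (signedSpikes m i) ≤ ENNReal.ofReal (K * (2 * m)) := by
        rw [ENNReal.ofReal_mul hK.le]; gcongr
    _ < ENNReal.ofReal (m * (log m - 2) / 4) := by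
        have hgap := mul_pos hmR (sub_pos.2 hlog)
        rw [ENNReal.ofReal_lt_ofReal_iff (by nlinarith)]; nlinarith
    _ = ∫⁻ _ in Ioo (0 : ℝ) 1, ENNReal.ofReal (m * (log m - 2) / 4) := by
        simp [Real.volume_Ioo]
    _ ≤ _ := lintegral_mono_ae hae
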